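/- arXiv:2511.01125 — 2 statements merged into one kernel-verified Lean document; each statement's English description precedes it below -/
import Mathlib

section
/- Let E be a real normed vector space, B ⊆ E a nonempty subset, and T, T' : B → B self-maps of B. Assume there are ρ ∈ (0,1) with ‖T(u) − T(v)‖ ≤ ρ‖u − v‖ for all u, v ∈ B, and η ≥ 0 with ‖T(u) − T'(u)‖ ≤ η for all u ∈ B, and let u* ∈ B satisfy T(u*) = u*. Then for every ε ∈ (0,1) and every u₀ ∈ B, taking J := ⌈ log(1/ε) / log(1/ρ) ⌉ iterations yields ‖u* − T'^{[J]}(u₀)‖ ≤ ε ‖u* − u₀‖ + η/(1 − ρ). -/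
/-- Combining the iterate-comparison estimate with the logarithmic choice of
depth: if `T` is a `ρ`-contraction on `B` with fixed point `u* ∈ B`, and `T'`
approximates `T` uniformly on `B` up to `η`, then taking
`J := ⌈log(1/ε)/log(1/ρ)⌉` iterations yields
`‖u* − T'^[J] u₀‖ ≤ ε ‖u* − u₀‖ + η/(1−ρ)`. -/
theorem fixed_point_log_depth_comparison
    {E : Type*} [NormedAddCommGroup E] [NormedSpace ℝ E]
    (B : Set E) (hB : B.Nonempty)
    (T T' : E → E) (hT : Set.MapsTo T B B) (hT' : Set.MapsTo T' B B)
    (ρ : ℝ) (hρ0 : 0 < ρ) (hρ1 : ρ < 1)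
    (hcontr : ∀ u ∈ B, ∀ v ∈ B, ‖T u - T v‖ ≤ ρ * ‖u - v‖)
    (η : ℝ) (hη : 0 ≤ η)
    (happrox : ∀ u ∈ B, ‖T u - T' u‖ ≤ η)
    (ustar : E) (hustar : ustar ∈ B) (hfix : T ustar = ustar) :
    ∀ ε : ℝ, 0 < ε → ε < 1 → ∀ u₀ ∈ B,
      ‖ustar - T'^[⌈Real.log (1 / ε) / Real.log (1 / ρ)⌉₊] u₀‖ ≤
        ε * ‖ustar - u₀‖ + η / (1 - ρ) := by
  intro ε hε0 hε1 u₀ hu₀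
  set J := ⌈Real.log (1 / ε) / Real.log (1 / ρ)⌉₊ with hJ
  have h1ρ : (0:ℝ) < 1 - ρ := by linarith
  -- key induction
  have key : ∀ n : ℕ, T'^[n] u₀ ∈ B ∧
      ‖ustar - T'^[n] u₀‖ ≤ ρ ^ n * ‖ustar - u₀‖ +
        η * ∑ i ∈ Finset.range n, ρ ^ i := by
    intro n
    induction n with
    | zero => simp [hu₀]
    | succ n ih =>
      obtain ⟨hmem, hbound⟩ := ih
      set w := T'^[n] u₀ with hw
      have hiter : T'^[n+1] u₀ = T' w := Function.iterate_succ_apply' T' n u₀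
      refine ⟨hiter ▸ hT' hmem, ?_⟩
      have step : ‖ustar - T' w‖ ≤ ρ * ‖ustar - w‖ + η := by
        calc ‖ustar - T' w‖ = ‖(T ustar - T w) + (T w - T' w)‖ := by
              rw [hfix]; congr 1; abel
          _ ≤ ‖T ustar - T w‖ + ‖T w - T' w‖ := norm_add_le _ _
          _ ≤ ρ * ‖ustar - w‖ + η := by
              gcongr
              · exact hcontr _ hustar _ hmem
              · exact happrox _ hmem
      rw [hiter]
      calc ‖ustar - T' w‖ ≤ ρ * ‖ustar - w‖ + η := step
        _ ≤ ρ * (ρ ^ n * ‖ustar - u₀‖ + η * ∑ i ∈ Finset.range n, ρ ^ i) + η := by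
            gcongr
        _ = ρ ^ (n+1) * ‖ustar - u₀‖ +
              η * ∑ i ∈ Finset.range (n+1), ρ ^ i := by
            have hgs := geom_sum_mul ρ n
            rw [Finset.sum_range_succ]
            linear_combination η * hgs
  obtain ⟨-, hbound⟩ := key J
  -- geometric sum bound
  have hsum : ∑ i ∈ Finset.range J, ρ ^ i ≤ 1 / (1 - ρ) := by
    have heq : (ρ ^ J - 1) / (ρ - 1) = (1 - ρ ^ J) / (1 - ρ) := by
      rw [div_eq_div_iff (sub_ne_zero.2 hρ1.ne) h1ρ.ne']; ring
    rw [geom_sum_eq hρ1.ne, heq]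
    have hpow : (0:ℝ) < ρ ^ J := pow_pos hρ0 J
    gcongr
    linarith
  -- ρ^J ≤ ε
  have hlogρ : Real.log ρ < 0 := Real.log_neg hρ0 hρ1
  have hlogε : Real.log ε < 0 := Real.log_neg hε0 hε1
  have harg : Real.log (1 / ε) / Real.log (1 / ρ) = Real.log ε / Real.log ρ := by
    rw [one_div, one_div, Real.log_inv, Real.log_inv, neg_div_neg_eq]
  have hJle : Real.log ε / Real.log ρ ≤ (J : ℝ) := by
    rw [← harg]; exact Nat.le_ceil _
  have hpowε : ρ ^ J ≤ ε := by
    have h1 : (J : ℝ) * Real.log ρ ≤ Real.log ε := by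
      have := mul_le_mul_of_nonpos_right hJle hlogρ.le
      rwa [div_mul_cancel₀ _ hlogρ.ne] at this
    have h2 : Real.log (ρ ^ J) ≤ Real.log ε := by
      rwa [Real.log_pow]
      -- log_pow : log (x^n) = n * log x
    calc ρ ^ J = Real.exp (Real.log (ρ ^ J)) :=
          (Real.exp_log (pow_pos hρ0 J)).symm
      _ ≤ Real.exp (Real.log ε) := Real.exp_le_exp.2 h2
      _ = ε := Real.exp_log hε0
  calc ‖ustar - T'^[J] u₀‖ ≤ ρ ^ J * ‖ustar - u₀‖ + η * ∑ i ∈ Finset.range J, ρ ^ i :=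
        hbound
    _ ≤ ε * ‖ustar - u₀‖ + η * (1 / (1 - ρ)) := by
        gcongr
    _ = ε * ‖ustar - u₀‖ + η / (1 - ρ) := by ring
end

section
/- Let d ≥ 1 be an integer and let D ⊆ ℝ^d be a Lebesgue-measurable set. Fix an integer H ≥ 2, reals δ with 0 < δ ≤ 1, M ≥ 0 and c ≥ 0. For each h ∈ {2,…,H} let k_h : ℝ^d × ℝ^d → ℝ be a jointly measurable kernel such that for every x ∈ D the function y ↦ k_h(x,y) is integrable on D and ∫_D |k_h(x,y)| dy ≤ M. Let v : ℝ^d → ℝ be measurable with |v(x)| ≤ c for every x ∈ D, and for a bounded measurable u define T(u)(x) := ∑_{h=2}^{H} ∫_D k_h(x,y) u(y)^h dy + v(x) for x ∈ D. Assume M ∑_{h=2}^{H} δ^h + c ≤ δ and ρ := M ∑_{h=2}^{H} h δ^{h−1} < 1. Then there exists a bounded measurable function u : D → ℝ with sup_{x∈D} |u(x)| ≤ δ satisfying u(x) = T(u)(x) for every x ∈ D, and u is the unique such function: any two bounded measurable functions with supremum at most δ on D satisfying the fixed-point equation pointwise on D coincide on D. -/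
open MeasureTheory Filter Topology

lemma my_abs_pow_sub_pow_le (a b δ : ℝ) (n : ℕ) (ha : |a| ≤ δ) (hb : |b| ≤ δ) :
    |a ^ n - b ^ n| ≤ (n : ℝ) * δ ^ (n - 1) * |a - b| := by
  have hδ0 : 0 ≤ δ := le_trans (abs_nonneg a) ha
  rw [← geom_sum₂_mul, abs_mul]
  have : |∑ i ∈ Finset.range n, a ^ i * b ^ (n - 1 - i)| ≤ (n : ℝ) * δ ^ (n - 1) := by
    calc |∑ i ∈ Finset.range n, a ^ i * b ^ (n - 1 - i)|
        ≤ ∑ i ∈ Finset.range n, |a ^ i * b ^ (n - 1 - i)| := Finset.abs_sum_le_sum_abs _ _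
      _ ≤ ∑ i ∈ Finset.range n, δ ^ (n - 1) := by
          apply Finset.sum_le_sum
          intro i hi
          rw [abs_mul, abs_pow, abs_pow]
          calc |a| ^ i * |b| ^ (n - 1 - i) ≤ δ ^ i * δ ^ (n - 1 - i) := by
                exact mul_le_mul (pow_le_pow_left₀ (abs_nonneg a) ha i)
                  (pow_le_pow_left₀ (abs_nonneg b) hb _)
                  (pow_nonneg (abs_nonneg b) _) (pow_nonneg hδ0 _)
            _ = δ ^ (n - 1) := by
                rw [← pow_add]
                congr 1
                have := Finset.mem_range.mp hi
                omega
      _ = (n : ℝ) * δ ^ (n - 1) := by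
          rw [Finset.sum_const, Finset.card_range, nsmul_eq_mul]
  exact mul_le_mul_of_nonneg_right this (abs_nonneg _)

/-- Well-posedness of the semilinear integral equation: under the self-map
condition `M ∑_{h=2}^H δ^h + c ≤ δ` and the contraction condition
`ρ := M ∑_{h=2}^H h δ^{h−1} < 1`, the fixed-point operator
`T(u)(x) = ∑_{h=2}^H ∫_D k_h(x,y) u(y)^h dy + v(x)` admits a bounded
measurable fixed point in the `δ`-ball, unique among such functions up to
equality on `D`. -/
theorem semilinear_integral_equation_wellposed
    (d : ℕ) (hd : 1 ≤ d)
    (D : Set (Fin d → ℝ)) (hDmeas : MeasurableSet D)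
    (H : ℕ) (hH : 2 ≤ H)
    (δ M c : ℝ) (hδ0 : 0 < δ) (hδ1 : δ ≤ 1) (hM : 0 ≤ M) (hc : 0 ≤ c)
    (k : ℕ → (Fin d → ℝ) → (Fin d → ℝ) → ℝ)
    (hkmeas : ∀ h ∈ Finset.Icc 2 H, Measurable (Function.uncurry (k h)))
    (hkint : ∀ h ∈ Finset.Icc 2 H, ∀ x ∈ D,
      IntegrableOn (fun y => k h x y) D volume ∧
      ∫ y in D, |k h x y| ≤ M)
    (v : (Fin d → ℝ) → ℝ) (hvmeas : Measurable v) (hv : ∀ x ∈ D, |v x| ≤ c)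
    (T : ((Fin d → ℝ) → ℝ) → (Fin d → ℝ) → ℝ)
    (hT : ∀ u x, T u x =
      (∑ h ∈ Finset.Icc 2 H, ∫ y in D, k h x y * u y ^ h) + v x)
    (hself : M * (∑ h ∈ Finset.Icc 2 H, δ ^ h) + c ≤ δ)
    (hcontr : M * (∑ h ∈ Finset.Icc 2 H, (h : ℝ) * δ ^ (h - 1)) < 1) :
    ∃ u : (Fin d → ℝ) → ℝ,
      Measurable u ∧ (∀ x ∈ D, |u x| ≤ δ) ∧ (∀ x ∈ D, u x = T u x) ∧
      ∀ u₁ u₂ : (Fin d → ℝ) → ℝ, Measurable u₁ → Measurable u₂ →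
        (∀ x ∈ D, |u₁ x| ≤ δ) → (∀ x ∈ D, |u₂ x| ≤ δ) →
        (∀ x ∈ D, u₁ x = T u₁ x) → (∀ x ∈ D, u₂ x = T u₂ x) →
        Set.EqOn u₁ u₂ D := by
  classical
  set ρ : ℝ := M * (∑ h ∈ Finset.Icc 2 H, (h : ℝ) * δ ^ (h - 1)) with hρdef
  have hρ0 : 0 ≤ ρ := by
    apply mul_nonneg hM
    apply Finset.sum_nonneg
    intro h _
    positivity
  -- integrability of the integrands
  have hInt : ∀ h ∈ Finset.Icc 2 H, ∀ x ∈ D, ∀ (w : (Fin d → ℝ) → ℝ) (C : ℝ),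
      Measurable w → (∀ y ∈ D, |w y| ≤ C) →
      IntegrableOn (fun y => k h x y * w y) D volume := by
    intro h hh x hx w C hwm hwb
    have hmul : IntegrableOn (fun y => w y * k h x y) D volume := by
      apply Integrable.bdd_mul (c := C) (hkint h hh x hx).1
      · exact (hwm.aestronglyMeasurable).restrict
      · rw [ae_restrict_iff' hDmeas]
        exact ae_of_all _ fun y hy => by simpa using hwb y hy
    simpa [mul_comm] using hmul
  -- the key integral estimate
  have hEst : ∀ h ∈ Finset.Icc 2 H, ∀ x ∈ D, ∀ (f : (Fin d → ℝ) → ℝ) (C : ℝ),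
      0 ≤ C → IntegrableOn (fun y => k h x y * f y) D volume →
      (∀ y ∈ D, |f y| ≤ C) →
      |∫ y in D, k h x y * f y| ≤ M * C := by
    intro h hh x hx f C hC hintf hfb
    have hkabs : IntegrableOn (fun y => |k h x y| * C) D volume :=
      ((hkint h hh x hx).1.abs).mul_const C
    have h1 : ‖∫ y in D, k h x y * f y‖ ≤ ∫ y in D, |k h x y| * C := by
      refine norm_integral_le_of_norm_le hkabs ?_
      rw [ae_restrict_iff' hDmeas]
      refine ae_of_all _ fun y hy => ?_
      rw [Real.norm_eq_abs, abs_mul]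
      exact mul_le_mul_of_nonneg_left (hfb y hy) (abs_nonneg _)
    rw [Real.norm_eq_abs] at h1
    have h2 : ∫ y in D, |k h x y| * C = (∫ y in D, |k h x y|) * C := by
      rw [integral_mul_const]
    have h3 : (∫ y in D, |k h x y|) * C ≤ M * C := by
      apply mul_le_mul_of_nonneg_right (hkint h hh x hx).2 hC
    linarith
  -- T maps the δ-ball to itself (on D)
  have hTbound : ∀ w : (Fin d → ℝ) → ℝ, Measurable w → (∀ y ∈ D, |w y| ≤ δ) →
      ∀ x ∈ D, |T w x| ≤ δ := by
    intro w hwm hwb x hx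
    rw [hT]
    calc |(∑ h ∈ Finset.Icc 2 H, ∫ y in D, k h x y * w y ^ h) + v x|
        ≤ |∑ h ∈ Finset.Icc 2 H, ∫ y in D, k h x y * w y ^ h| + |v x| := abs_add_le _ _
      _ ≤ (∑ h ∈ Finset.Icc 2 H, M * δ ^ h) + c := by
          gcongr ?_ + ?_
          · refine (Finset.abs_sum_le_sum_abs _ _).trans (Finset.sum_le_sum fun h hh => ?_)
            refine hEst h hh x hx (fun y => w y ^ h) (δ ^ h) (by positivity) ?_ ?_
            · exact hInt h hh x hx _ (δ ^ h) (hwm.pow_const h)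
                (fun y hy => by rw [abs_pow]; exact pow_le_pow_left₀ (abs_nonneg _) (hwb y hy) h)
            · intro y hy
              rw [abs_pow]
              exact pow_le_pow_left₀ (abs_nonneg _) (hwb y hy) h
          · exact hv x hx
      _ = M * (∑ h ∈ Finset.Icc 2 H, δ ^ h) + c := by rw [Finset.mul_sum]
      _ ≤ δ := hself
  -- the contraction estimate
  have hTdiff : ∀ (w₁ w₂ : (Fin d → ℝ) → ℝ) (s : ℝ), 0 ≤ s →
      Measurable w₁ → Measurable w₂ →
      (∀ y ∈ D, |w₁ y| ≤ δ) → (∀ y ∈ D, |w₂ y| ≤ δ) →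
      (∀ y ∈ D, |w₁ y - w₂ y| ≤ s) →
      ∀ x ∈ D, |T w₁ x - T w₂ x| ≤ ρ * s := by
    intro w₁ w₂ s hs hm₁ hm₂ hb₁ hb₂ hd12 x hx
    have hi₁ : ∀ h ∈ Finset.Icc 2 H, IntegrableOn (fun y => k h x y * w₁ y ^ h) D volume :=
      fun h hh => hInt h hh x hx _ (δ ^ h) (hm₁.pow_const h)
        (fun y hy => by rw [abs_pow]; exact pow_le_pow_left₀ (abs_nonneg _) (hb₁ y hy) h)
    have hi₂ : ∀ h ∈ Finset.Icc 2 H, IntegrableOn (fun y => k h x y * w₂ y ^ h) D volume :=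
      fun h hh => hInt h hh x hx _ (δ ^ h) (hm₂.pow_const h)
        (fun y hy => by rw [abs_pow]; exact pow_le_pow_left₀ (abs_nonneg _) (hb₂ y hy) h)
    have key : T w₁ x - T w₂ x =
        ∑ h ∈ Finset.Icc 2 H, ∫ y in D, k h x y * (w₁ y ^ h - w₂ y ^ h) := by
      rw [hT, hT]
      have : ∀ h ∈ Finset.Icc 2 H,
          (∫ y in D, k h x y * (w₁ y ^ h - w₂ y ^ h)) =
          (∫ y in D, k h x y * w₁ y ^ h) - ∫ y in D, k h x y * w₂ y ^ h := by
        intro h hh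
        rw [← integral_sub (hi₁ h hh) (hi₂ h hh)]
        congr 1
        ext y
        ring
      rw [Finset.sum_congr rfl this, Finset.sum_sub_distrib]
      ring
    rw [key]
    calc |∑ h ∈ Finset.Icc 2 H, ∫ y in D, k h x y * (w₁ y ^ h - w₂ y ^ h)|
        ≤ ∑ h ∈ Finset.Icc 2 H, |∫ y in D, k h x y * (w₁ y ^ h - w₂ y ^ h)| :=
          Finset.abs_sum_le_sum_abs _ _
      _ ≤ ∑ h ∈ Finset.Icc 2 H, M * ((h : ℝ) * δ ^ (h - 1) * s) := by
          refine Finset.sum_le_sum fun h hh => ?_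
          refine hEst h hh x hx _ ((h : ℝ) * δ ^ (h - 1) * s) (by positivity) ?_ ?_
          · have heq : (fun y => k h x y * (w₁ y ^ h - w₂ y ^ h)) =
                (fun y => k h x y * w₁ y ^ h) - (fun y => k h x y * w₂ y ^ h) := by
              ext y; simp only [Pi.sub_apply]; ring
            rw [IntegrableOn, heq]
            exact (hi₁ h hh).sub (hi₂ h hh)
          · intro y hy
            calc |w₁ y ^ h - w₂ y ^ h| ≤ (h : ℝ) * δ ^ (h - 1) * |w₁ y - w₂ y| :=
                  my_abs_pow_sub_pow_le _ _ δ h (hb₁ y hy) (hb₂ y hy)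
              _ ≤ (h : ℝ) * δ ^ (h - 1) * s := by
                  exact mul_le_mul_of_nonneg_left (hd12 y hy) (by positivity)
      _ = ρ * s := by
          rw [hρdef, Finset.mul_sum, Finset.sum_mul]
          exact Finset.sum_congr rfl fun h _ => by ring
  -- measurability of T w
  have hTmeas : ∀ w : (Fin d → ℝ) → ℝ, Measurable w → Measurable (T w) := by
    intro w hwm
    have : (T w) = fun x =>
        (∑ h ∈ Finset.Icc 2 H, ∫ y in D, k h x y * w y ^ h) + v x := by
      ext x; exact hT w x
    rw [this]
    refine Measurable.add ?_ hvmeas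
    refine Finset.measurable_sum _ fun h hh => ?_
    have hfm : StronglyMeasurable
        (fun p : (Fin d → ℝ) × (Fin d → ℝ) => k h p.1 p.2 * w p.2 ^ h) := by
      apply Measurable.stronglyMeasurable
      exact (hkmeas h hh).mul ((hwm.comp measurable_snd).pow_const h)
    exact hfm.integral_prod_right'.measurable
  -- Picard iteration
  let useq : ℕ → (Fin d → ℝ) → ℝ := fun n => Nat.rec (fun _ => 0)
    (fun _ u => fun x => if x ∈ D then T u x else 0) n
  have useq_zero : useq 0 = fun _ => 0 := rfl
  have useq_succ : ∀ n, useq (n + 1) = fun x => if x ∈ D then T (useq n) x else 0 :=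
    fun n => rfl
  have useq_succ' : ∀ n x, useq (n + 1) x = if x ∈ D then T (useq n) x else 0 :=
    fun n x => rfl
  have hum : ∀ n, Measurable (useq n) := by
    intro n
    induction n with
    | zero => exact measurable_const
    | succ n ih =>
      rw [useq_succ]
      exact Measurable.ite hDmeas (hTmeas _ ih) measurable_const
  have hub : ∀ n, ∀ x ∈ D, |useq n x| ≤ δ := by
    intro n
    induction n with
    | zero => intro x hx; simp [useq_zero]; exact hδ0.le
    | succ n ih =>
      intro x hx
      rw [useq_succ]
      simp only [if_pos hx]
      exact hTbound _ (hum n) ih x hx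
  have hgeo : ∀ n, ∀ x ∈ D, |useq (n + 1) x - useq n x| ≤ δ * ρ ^ n := by
    intro n
    induction n with
    | zero =>
      intro x hx
      simp only [useq_zero, pow_zero, mul_one]
      simpa using hub 1 x hx
    | succ n ih =>
      intro x hx
      rw [useq_succ' (n + 1) x, useq_succ' n x, if_pos hx, if_pos hx]
      have := hTdiff (useq (n + 1)) (useq n) (δ * ρ ^ n) (by positivity)
        (hum (n + 1)) (hum n) (fun y hy => hub (n + 1) y hy) (fun y hy => hub n y hy)
        ih x hx
      calc |T (useq (n + 1)) x - T (useq n) x| ≤ ρ * (δ * ρ ^ n) := this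
        _ = δ * ρ ^ (n + 1) := by ring
  -- off D everything is zero
  have hoff : ∀ n, ∀ x, x ∉ D → useq n x = 0 := by
    intro n
    induction n with
    | zero => intro x _; rfl
    | succ n _ => intro x hx; rw [useq_succ]; simp [hx]
  -- convergence
  have hcauchy : ∀ x, ∃ L, Tendsto (fun n => useq n x) atTop (𝓝 L) := by
    intro x
    by_cases hx : x ∈ D
    · have : CauchySeq (fun n => useq n x) := by
        apply cauchySeq_of_le_geometric ρ δ hcontr
        intro n
        rw [Real.dist_eq]
        have := hgeo n x hx
        rw [abs_sub_comm]
        linarith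
      exact cauchySeq_tendsto_of_complete this
    · exact ⟨0, by simp only [hoff _ x hx]; exact tendsto_const_nhds⟩
  choose u hu using hcauchy
  have humeas : Measurable u := by
    apply measurable_of_tendsto_metrizable hum
    rw [tendsto_pi_nhds]
    exact hu
  have hubδ : ∀ x ∈ D, |u x| ≤ δ := by
    intro x hx
    have : Tendsto (fun n => |useq n x|) atTop (𝓝 |u x|) :=
      (continuous_abs.tendsto _).comp (hu x)
    exact le_of_tendsto this (Eventually.of_forall fun n => hub n x hx)
  -- uniform tail bound
  have htail : ∀ n, ∀ x ∈ D, |useq n x - u x| ≤ δ * ρ ^ n / (1 - ρ) := by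
    intro n x hx
    have hdg : ∀ m, dist (useq m x) (useq (m + 1) x) ≤ δ * ρ ^ m := by
      intro m
      rw [Real.dist_eq, abs_sub_comm]
      exact hgeo m x hx
    have := dist_le_of_le_geometric_of_tendsto ρ δ hcontr hdg (hu x) n
    rwa [Real.dist_eq] at this
  -- fixed point
  have hfix : ∀ x ∈ D, u x = T u x := by
    intro x hx
    have h1 : Tendsto (fun n => useq (n + 1) x) atTop (𝓝 (u x)) :=
      (hu x).comp (tendsto_add_atTop_nat 1)
    have h2 : Tendsto (fun n => useq (n + 1) x) atTop (𝓝 (T u x)) := by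
      have hb : ∀ n, |useq (n + 1) x - T u x| ≤ ρ * (δ * ρ ^ n / (1 - ρ)) := by
        intro n
        rw [useq_succ]
        simp only [if_pos hx]
        exact hTdiff (useq n) u (δ * ρ ^ n / (1 - ρ))
          (div_nonneg (by positivity) (by linarith)) (hum n) humeas (hub n) hubδ
          (fun y hy => htail n y hy) x hx
      rw [tendsto_iff_dist_tendsto_zero]
      have hlim2 : Tendsto (fun n : ℕ => ρ * (δ * ρ ^ n / (1 - ρ))) atTop (𝓝 0) := by
        have h := (tendsto_pow_atTop_nhds_zero_of_lt_one hρ0 hcontr).const_mul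
          (ρ * δ / (1 - ρ))
        rw [mul_zero] at h
        exact h.congr fun n => by ring
      exact squeeze_zero (fun n => dist_nonneg)
        (fun n => by rw [Real.dist_eq]; exact hb n) hlim2
    exact tendsto_nhds_unique h1 h2
  -- uniqueness
  refine ⟨u, humeas, hubδ, hfix, ?_⟩
  intro u₁ u₂ hm₁ hm₂ hb₁ hb₂ hf₁ hf₂ x hx
  have hiter : ∀ n, ∀ y ∈ D, |u₁ y - u₂ y| ≤ ρ ^ n * (2 * δ) := by
    intro n
    induction n with
    | zero =>
      intro y hy
      simp only [pow_zero, one_mul]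
      calc |u₁ y - u₂ y| ≤ |u₁ y| + |u₂ y| := abs_sub _ _
        _ ≤ 2 * δ := by linarith [hb₁ y hy, hb₂ y hy]
    | succ n ih =>
      intro y hy
      rw [hf₁ y hy, hf₂ y hy]
      calc |T u₁ y - T u₂ y| ≤ ρ * (ρ ^ n * (2 * δ)) :=
            hTdiff u₁ u₂ (ρ ^ n * (2 * δ)) (by positivity) hm₁ hm₂ hb₁ hb₂ ih y hy
        _ = ρ ^ (n + 1) * (2 * δ) := by ring
  have hlim : Tendsto (fun n : ℕ => ρ ^ n * (2 * δ)) atTop (𝓝 0) := by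
    have := (tendsto_pow_atTop_nhds_zero_of_lt_one hρ0 hcontr).mul_const (2 * δ)
    rwa [zero_mul] at this
  have h0 : |u₁ x - u₂ x| ≤ 0 :=
    ge_of_tendsto' hlim (fun n => hiter n x hx)
  have := abs_nonneg (u₁ x - u₂ x)
  have : u₁ x - u₂ x = 0 := abs_eq_zero.mp (le_antisymm h0 this)
  linarith
end
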